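/- Let (X,d,μ) be a proper geodesic metric measure space with δ-annular decay (δ ∈ (0,1]), Ω a bounded domain, and ϱ an L-Lipschitz admissible radius function (L ≥ 1) satisfying λ dist(x,∂Ω)^β ≤ ϱ(x) ≤ ε dist(x,∂Ω) on Ω with 0 < λ ≤ ℓ(Ω)^{1−β} ε, where ℓ(Ω) = sup_{x∈Ω} dist(x,∂Ω). Assume |α| < 1/L, 0 < ε < 1 − L|α|, and 1 ≤ β < log(1/(L|α|)) / log(1/(1−ε)). Then every u continuous on the closure of Ω with T_α u = u, where T_α u(x) = (α/2)(sup_{B_x} u + inf_{B_x} u) + (1−α) ⨍_{B_x} u dμ, is locally δ-Hölder continuous in Ω; if δ = 1, u is locally Lipschitz in Ω. -/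

import Mathlib

/-!
Fix points `x, y` at distance at least `ρ` from `∂Ω` and expand `u x - u y` with `u = T_α u`.
The two ball averages differ by `O(ρ^{-βδ}) · d(x,y)^δ`: by annular decay, both balls contain a
common ball and differ from it only by thin annuli. The difference of the sup and inf terms is
controlled by pulling the extremal point of one ball into the other along a geodesic, which
produces two differences `|u a - u a'|`, `|u b - u b'|` whose δ-powered distances add up to at
most `2 L^δ d(x,y)^δ`. The new points lie at distance at least `(1 - ε)ρ` from `∂Ω`, where the
average term is larger by `(1 - ε)^{-βδ}`; the condition on `β` makes
`|α| L^δ (1 - ε)^{-βδ} < 1`, so iterating the estimate gives a convergent geometric series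
plus a remainder `|α|^n · 2 sup |u|` that tends to zero.
-/

open MeasureTheory Metric Set

theorem add_rpow_le_two_mul_half_add_rpow {a b δ : ℝ} (ha : 0 ≤ a) (hb : 0 ≤ b) (hδ0 : 0 ≤ δ)
    (hδ1 : δ ≤ 1) : a ^ δ + b ^ δ ≤ 2 * ((a + b) / 2) ^ δ := by
  have := (Real.concaveOn_rpow hδ0 hδ1).2 (mem_Ici.2 ha) (mem_Ici.2 hb)
    (show (0 : ℝ) ≤ 1 / 2 by norm_num) (show (0 : ℝ) ≤ 1 / 2 by norm_num) (by norm_num)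
  simp only [smul_eq_mul] at this
  rw [show 1 / 2 * a + 1 / 2 * b = (a + b) / 2 by ring] at this
  linarith

theorem max_add_rpow_add_max_sub_rpow_le {t ξ L δ : ℝ} (hL : 1 ≤ L) (hξ : |ξ| ≤ L * t)
    (hδ0 : 0 ≤ δ) (hδ1 : δ ≤ 1) : max (t + ξ) 0 ^ δ + max (t - ξ) 0 ^ δ ≤ 2 * L ^ δ * t ^ δ := by
  obtain ⟨hξ1, hξ2⟩ := abs_le.1 hξ
  have ht : 0 ≤ t := nonneg_of_mul_nonneg_right (by linarith) (by linarith : (0 : ℝ) < L)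
  have hsum : (max (t + ξ) 0 + max (t - ξ) 0) / 2 ≤ L * t := by
    rcases le_total (t + ξ) 0 with h | h <;> rcases le_total (t - ξ) 0 with h' | h' <;>
      simp only [max_eq_left, max_eq_right, h, h'] <;> nlinarith
  calc max (t + ξ) 0 ^ δ + max (t - ξ) 0 ^ δ
      ≤ 2 * ((max (t + ξ) 0 + max (t - ξ) 0) / 2) ^ δ :=
        add_rpow_le_two_mul_half_add_rpow (le_max_right _ _) (le_max_right _ _) hδ0 hδ1
    _ ≤ 2 * (L * t) ^ δ := by gcongr
    _ = 2 * L ^ δ * t ^ δ := by rw [Real.mul_rpow (by linarith) ht, mul_assoc]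

-- In a proper space this is equivalent to being a geodesic space.
def IsGeodesic (X : Type*) [MetricSpace X] : Prop :=
  ∀ x y : X, ∀ s : ℝ, 0 ≤ s → s ≤ dist x y → ∃ z : X, dist x z = s ∧ dist z y = dist x y - s

namespace IsGeodesic

variable {X : Type*} [MetricSpace X]

theorem exists_mem_closedBall_dist_le (hX : IsGeodesic X) (a y : X) {r : ℝ} (hr : 0 ≤ r) :
    ∃ a' ∈ closedBall y r, dist a a' ≤ max (dist a y - r) 0 := by
  rcases le_or_gt (dist a y) r with h | h
  · exact ⟨a, mem_closedBall.2 h, by simp⟩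
  · obtain ⟨z, hz, hzy⟩ := hX a y (dist a y - r) (by linarith) (by linarith)
    exact ⟨z, mem_closedBall.2 (by linarith), hz.le.trans (le_max_left _ _)⟩

theorem exists_mem_frontier_dist_lt [ProperSpace X] (hX : IsGeodesic X) {s : Set X} {x z : X}
    (hx : x ∈ closure s) (hz : z ∉ closure s) : ∃ w ∈ frontier s, dist x w < dist x z := by
  set W := {w | w ∈ closure s ∧ dist x w + dist w z = dist x z}
  have hW : IsCompact W := by
    refine (isCompact_closedBall x (dist x z)).of_isClosed_subset
      (isClosed_closure.inter (isClosed_eq (by fun_prop) continuous_const)) ?_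
    exact fun w hw => mem_closedBall'.2 (by linarith [hw.2, dist_nonneg (x := w) (y := z)])
  obtain ⟨w, ⟨hws, hwz⟩, hwmax⟩ :=
    hW.exists_isMaxOn ⟨x, hx, by simp⟩ (f := (dist x ·)) (by fun_prop)
  have hwz_pos : 0 < dist w z := dist_pos.2 fun h => hz (h ▸ hws)
  refine ⟨w, frontier_eq_closure_inter_closure (s := s) ▸ ⟨hws, ?_⟩, by linarith⟩
  -- Points just beyond `w` on a geodesic towards `z` lie outside `s`, by maximality of `w`.
  refine Metric.mem_closure_iff.2 fun e he => ?_
  obtain ⟨v, hwv, hvz⟩ := hX w z (min (e / 2) (dist w z)) (by positivity) (min_le_right _ _)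
  refine ⟨v, fun hv => ?_, by rw [hwv]; linarith [min_le_left (e / 2) (dist w z)]⟩
  have hxv : dist x v = dist x w + min (e / 2) (dist w z) :=
    le_antisymm (hwv ▸ dist_triangle x w v) (by linarith [dist_triangle x v z])
  have : dist x v ≤ dist x w := hwmax (show v ∈ W from ⟨subset_closure hv, by linarith⟩)
  linarith [lt_min (half_pos he) hwz_pos]

theorem closedBall_infDist_frontier_subset_closure [ProperSpace X] (hX : IsGeodesic X)
    {s : Set X} {x : X} (hx : x ∈ closure s) :
    closedBall x (infDist x (frontier s)) ⊆ closure s := by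
  intro z hz
  by_contra hzs
  obtain ⟨w, hw, hxw⟩ := hX.exists_mem_frontier_dist_lt hx hzs
  linarith [infDist_le_dist_of_mem (x := x) hw, mem_closedBall'.1 hz]

theorem closedBall_subset_of_le_mul_infDist_frontier [ProperSpace X] (hX : IsGeodesic X)
    {Ω : Set X} (hΩ : IsOpen Ω) {x : X} (hx : x ∈ Ω) {ρ r ε : ℝ}
    (hρ : ρ ≤ infDist x (frontier Ω)) (hd : 0 < infDist x (frontier Ω)) (hε : ε < 1)
    (hr : r ≤ ε * infDist x (frontier Ω)) :
    closedBall x r ⊆ {z ∈ Ω | (1 - ε) * ρ ≤ infDist z (frontier Ω)} := by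
  intro z hz
  have hdepth : (1 - ε) * infDist x (frontier Ω) ≤ infDist z (frontier Ω) := by
    linarith [infDist_le_infDist_add_dist (s := frontier Ω) (x := x) (y := z),
      dist_comm x z ▸ mem_closedBall.1 hz]
  refine ⟨?_, (mul_le_mul_of_nonneg_left hρ (by linarith)).trans hdepth⟩
  have hzΩ : z ∈ closure Ω := hX.closedBall_infDist_frontier_subset_closure (subset_closure hx)
    (closedBall_subset_closedBall (by nlinarith) hz)
  by_contra hz'
  have := infDist_zero_of_mem (hΩ.frontier_eq ▸ ⟨hzΩ, hz'⟩ : z ∈ frontier Ω)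
  nlinarith

theorem exists_sSup_image_closedBall_sub_le [ProperSpace X] (hX : IsGeodesic X) {f : X → ℝ}
    {x y : X} {r r' : ℝ} (hr : 0 ≤ r) (hr' : 0 ≤ r')
    (hf : ContinuousOn f (closedBall x r ∪ closedBall y r')) :
    ∃ p ∈ closedBall x r, ∃ p' ∈ closedBall y r', dist p p' ≤ max (dist x y + r - r') 0 ∧
      sSup (f '' closedBall x r) - sSup (f '' closedBall y r') ≤ f p - f p' := by
  obtain ⟨p, hp, hpS⟩ := ((isCompact_closedBall x r).image_of_continuousOn
    (hf.mono subset_union_left)).sSup_mem ((nonempty_closedBall.2 hr).image f)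
  obtain ⟨p', hp', hpp'⟩ := hX.exists_mem_closedBall_dist_le p y hr'
  refine ⟨p, hp, p', hp', hpp'.trans (max_le_max ?_ le_rfl), ?_⟩
  · linarith [dist_triangle p x y, mem_closedBall.1 hp]
  · have := le_csSup ((isCompact_closedBall y r').image_of_continuousOn
      (hf.mono subset_union_right)).bddAbove (mem_image_of_mem f hp')
    linarith

theorem exists_sInf_image_closedBall_sub_le [ProperSpace X] (hX : IsGeodesic X) {f : X → ℝ}
    {x y : X} {r r' : ℝ} (hr : 0 ≤ r) (hr' : 0 ≤ r')
    (hf : ContinuousOn f (closedBall x r ∪ closedBall y r')) :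
    ∃ q ∈ closedBall y r', ∃ q' ∈ closedBall x r, dist q q' ≤ max (dist x y + r' - r) 0 ∧
      sInf (f '' closedBall x r) - sInf (f '' closedBall y r') ≤ f q' - f q := by
  obtain ⟨q, hq, q', hq', hqq', h⟩ :=
    hX.exists_sSup_image_closedBall_sub_le (f := fun z => -f z) hr' hr (union_comm _ _ ▸ hf.neg)
  have hneg (B : Set X) : (fun z => -f z) '' B = -(f '' B) := by
    rw [← image_neg_eq_neg, image_image]
  simp only [hneg, Real.sSup_neg] at h
  exact ⟨q, hq, q', hq', dist_comm x y ▸ hqq', by linarith⟩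

theorem exists_midrange_sub_le [ProperSpace X] (hX : IsGeodesic X) {f : X → ℝ}
    {x y : X} {r r' L δ : ℝ} (hr : 0 ≤ r) (hr' : 0 ≤ r')
    (hf : ContinuousOn f (closedBall x r ∪ closedBall y r')) (hL : 1 ≤ L)
    (hrr' : |r - r'| ≤ L * dist x y) (hδ0 : 0 < δ) (hδ1 : δ ≤ 1) (α : ℝ) :
    ∃ a ∈ closedBall x r ∪ closedBall y r', ∃ a' ∈ closedBall x r ∪ closedBall y r',
    ∃ b ∈ closedBall x r ∪ closedBall y r', ∃ b' ∈ closedBall x r ∪ closedBall y r',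
      dist a a' ^ δ + dist b b' ^ δ ≤ 2 * L ^ δ * dist x y ^ δ ∧
      α / 2 * (sSup (f '' closedBall x r) + sInf (f '' closedBall x r)) -
          α / 2 * (sSup (f '' closedBall y r') + sInf (f '' closedBall y r')) ≤
        |α| / 2 * (|f a - f a'| + |f b - f b'|) := by
  have hcost := max_add_rpow_add_max_sub_rpow_le hL hrr' hδ0.le hδ1
  have hmono {a a' : X} {c : ℝ} (h : dist a a' ≤ max c 0) : dist a a' ^ δ ≤ max c 0 ^ δ :=
    Real.rpow_le_rpow dist_nonneg h hδ0.le
  rcases le_or_gt 0 α with hα | hα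
  · obtain ⟨p, hp, p', hp', hpp', hS⟩ := hX.exists_sSup_image_closedBall_sub_le hr hr' hf
    obtain ⟨q, hq, q', hq', hqq', hI⟩ := hX.exists_sInf_image_closedBall_sub_le hr hr' hf
    refine ⟨p, .inl hp, p', .inr hp', q, .inr hq, q', .inl hq', ?_, ?_⟩
    · refine (add_le_add (hmono hpp') (hmono hqq')).trans (le_of_eq_of_le ?_ hcost)
      ring_nf
    · rw [abs_of_nonneg hα, ← mul_sub]
      refine mul_le_mul_of_nonneg_left ?_ (by positivity)
      linarith [le_abs_self (f p - f p'), neg_abs_le (f q - f q')]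
  · obtain ⟨p, hp, p', hp', hpp', hS⟩ := hX.exists_sSup_image_closedBall_sub_le hr' hr
      (union_comm _ _ ▸ hf)
    obtain ⟨q, hq, q', hq', hqq', hI⟩ := hX.exists_sInf_image_closedBall_sub_le hr' hr
      (union_comm _ _ ▸ hf)
    refine ⟨q, .inl hq, q', .inr hq', p, .inr hp, p', .inl hp', ?_, ?_⟩
    · refine (add_le_add (hmono hqq') (hmono hpp')).trans (le_of_eq_of_le ?_ hcost)
      rw [dist_comm y x]; ring_nf
    · rw [abs_of_neg hα, show ∀ c d, α / 2 * c - α / 2 * d = -α / 2 * (d - c) by intros; ring]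
      refine mul_le_mul_of_nonneg_left ?_ (by linarith)
      linarith [le_abs_self (f p - f p'), neg_abs_le (f q - f q')]

end IsGeodesic

section Average

variable {Y : Type*} [MeasurableSpace Y] {μ : Measure Y} {f : Y → ℝ} {M : ℝ}

theorem abs_setAverage_le {s : Set Y} (hμ : μ s ≠ ⊤) (hM0 : 0 ≤ M) (hM : ∀ x ∈ s, |f x| ≤ M) :
    |⨍ x in s, f x ∂μ| ≤ M := by
  have h := norm_setIntegral_le_of_norm_le_const hμ.lt_top fun x hx =>
    (Real.norm_eq_abs (f x)).trans_le (hM x hx)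
  rw [Real.norm_eq_abs] at h
  rw [setAverage_eq, smul_eq_mul, abs_mul, abs_inv, abs_of_nonneg measureReal_nonneg]
  rcases (measureReal_nonneg (μ := μ) (s := s)).eq_or_lt with h0 | hpos
  · simpa [← h0] using hM0
  · rwa [inv_mul_le_iff₀ hpos, mul_comm]

theorem abs_setAverage_sub_setAverage_le {s t : Set Y} (hts : t ⊆ s) (ht : MeasurableSet t)
    (ht0 : μ t ≠ 0) (hμs : μ s ≠ ⊤) (hf : IntegrableOn f s μ) (hM : ∀ x ∈ s, |f x| ≤ M) :
    |⨍ x in s, f x ∂μ - ⨍ x in t, f x ∂μ| ≤ 2 * M * (μ.real (s \ t) / μ.real s) := by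
  obtain ⟨x, hx⟩ := nonempty_of_measure_ne_zero ht0
  have hM0 : 0 ≤ M := (abs_nonneg _).trans (hM x (hts hx))
  have hμt : μ t ≠ ⊤ := ne_top_of_le_ne_top hμs (measure_mono hts)
  have hμd : μ (s \ t) ≠ ⊤ := ne_top_of_le_ne_top hμs (measure_mono sdiff_subset)
  have hpos : 0 < μ.real t := ENNReal.toReal_pos ht0 hμt
  have hsum : μ.real (s \ t) + μ.real t = μ.real s := by
    rw [measureReal_sdiff hts ht hμs]; ring
  have hsplit := average_union (μ := μ) (f := f) disjoint_sdiff_left.aedisjoint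
    ht.nullMeasurableSet hμd hμt (hf.mono_set sdiff_subset) (hf.mono_set hts)
  rw [sdiff_union_of_subset hts, hsum, smul_eq_mul, smul_eq_mul] at hsplit
  have hdiff : ⨍ x in s, f x ∂μ - ⨍ x in t, f x ∂μ =
      μ.real (s \ t) / μ.real s * (⨍ x in s \ t, f x ∂μ - ⨍ x in t, f x ∂μ) := by
    have : 0 < μ.real s := by linarith [measureReal_nonneg (μ := μ) (s := s \ t)]
    rw [hsplit, ← hsum]; field_simp; ring
  rw [hdiff, abs_mul, abs_of_nonneg (by positivity), mul_comm]
  gcongr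
  linarith [abs_sub (⨍ x in s \ t, f x ∂μ) (⨍ x in t, f x ∂μ),
    abs_setAverage_le hμd hM0 fun z hz => hM z hz.1,
    abs_setAverage_le hμt hM0 fun z hz => hM z (hts hz)]

end Average

section Instances

variable {X : Type*} [PseudoMetricSpace X] [MeasurableSpace X] {μ : Measure X}

theorem isFiniteMeasureOnCompacts_of_measure_closedBall_lt_top
    (h : ∀ (x : X) (r : ℝ), 0 < r → μ (closedBall x r) < ⊤) : IsFiniteMeasureOnCompacts μ :=
  have : IsLocallyFiniteMeasure μ :=
    ⟨fun x => ⟨closedBall x 1, closedBall_mem_nhds x one_pos, h x 1 one_pos⟩⟩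
  inferInstance

theorem isOpenPosMeasure_of_measure_closedBall_pos
    (h : ∀ (x : X) (r : ℝ), 0 < r → 0 < μ (closedBall x r)) : μ.IsOpenPosMeasure :=
  ⟨fun U hU ⟨x, hx⟩ => by
    obtain ⟨r, hr, hrU⟩ := Metric.isOpen_iff.1 hU x hx
    exact ((h x (r / 2) (half_pos hr)).trans_le
      (measure_mono ((closedBall_subset_ball (half_lt_self hr)).trans hrU))).ne'⟩

end Instances

def HasAnnularDecay {X : Type*} [MetricSpace X] [MeasurableSpace X] (μ : Measure X) (δ D : ℝ) :
    Prop :=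
  ∀ (x : X) (r R : ℝ), 0 < r → r ≤ R →
    μ (closedBall x R \ closedBall x r) ≤
      ENNReal.ofReal (D * ((R - r) / R) ^ δ) * μ (closedBall x R)

namespace HasAnnularDecay

variable {X : Type*} [MetricSpace X] [ProperSpace X] [MeasurableSpace X]
  {μ : Measure X} [IsFiniteMeasureOnCompacts μ] {δ D : ℝ} {f : X → ℝ} {M : ℝ}

theorem abs_setAverage_closedBall_sub_le (hμ : HasAnnularDecay μ δ D) (hD : 0 ≤ D) {c : X}
    {ρ s : ℝ} {t : Set X} (hs : 0 < s) (hsρ : s ≤ ρ) (hst : closedBall c s ⊆ t)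
    (htρ : t ⊆ closedBall c ρ) (ht : MeasurableSet t) (ht0 : μ t ≠ 0)
    (hf : IntegrableOn f (closedBall c ρ) μ) (hM : ∀ z ∈ closedBall c ρ, |f z| ≤ M) :
    |⨍ z in closedBall c ρ, f z ∂μ - ⨍ z in t, f z ∂μ| ≤ 2 * M * (D * ((ρ - s) / ρ) ^ δ) := by
  obtain ⟨x, hx⟩ := nonempty_of_measure_ne_zero ht0
  have hM0 : 0 ≤ M := (abs_nonneg _).trans (hM x (htρ hx))
  have hfin := (measure_closedBall_lt_top (μ := μ) (x := c) (r := ρ)).ne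
  have hcoef : 0 ≤ D * ((ρ - s) / ρ) ^ δ :=
    mul_nonneg hD (Real.rpow_nonneg (div_nonneg (by linarith) (by linarith)) δ)
  have hann : μ.real (closedBall c ρ \ t) ≤ D * ((ρ - s) / ρ) ^ δ * μ.real (closedBall c ρ) := by
    refine (measureReal_mono (sdiff_subset_sdiff_right hst)
      (ne_top_of_le_ne_top hfin (measure_mono sdiff_subset))).trans ?_
    have := ENNReal.toReal_mono (by finiteness) (hμ c s ρ hs hsρ)
    rwa [ENNReal.toReal_mul, ENNReal.toReal_ofReal hcoef] at this
  refine (abs_setAverage_sub_setAverage_le htρ ht ht0 hfin hf hM).trans ?_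
  gcongr
  exact div_le_of_le_mul₀ measureReal_nonneg hcoef hann

theorem abs_setAverage_closedBall_sub_setAverage_closedBall_le (hμ : HasAnnularDecay μ δ D)
    (hD : 1 ≤ D) (hδ : 0 < δ) [OpensMeasurableSpace X] [μ.IsOpenPosMeasure] {x y : X}
    {r r' R L : ℝ} (hR : 0 < R)
    (hRr : R ≤ r) (hRr' : R ≤ r') (hL : 1 ≤ L) (hrr' : |r - r'| ≤ L * dist x y)
    (hfx : IntegrableOn f (closedBall x r) μ) (hfy : IntegrableOn f (closedBall y r') μ)
    (hM : ∀ z ∈ closedBall x r ∪ closedBall y r', |f z| ≤ M) :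
    |⨍ z in closedBall x r, f z ∂μ - ⨍ z in closedBall y r', f z ∂μ| ≤
      4 * M * D * ((1 + L) / R) ^ δ * dist x y ^ δ := by
  set t := dist x y
  have ht : 0 ≤ t := dist_nonneg
  rw [mul_assoc _ (((1 + L) / R) ^ δ), ← Real.mul_rpow (div_nonneg (by linarith) hR.le) ht,
    div_mul_eq_mul_div]
  have hLt : t ≤ L * t := le_mul_of_one_le_left ht hL
  have hM0 : 0 ≤ M := (abs_nonneg _).trans (hM x (.inl (mem_closedBall_self (by linarith))))
  obtain ⟨hrr'1, hrr'2⟩ := abs_le.1 hrr'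
  rcases lt_or_ge (2 * t) R with hsmall | hlarge
  · -- Both averages are compared with the average over the common ball `closedBall x r₀`.
    set r₀ := min r (r' - t)
    have hr₀r : r₀ ≤ r := min_le_left _ _
    have hr₀r' : r₀ ≤ r' - t := min_le_right _ _
    have hr₀ : R - t ≤ r₀ := le_min (by linarith) (by linarith)
    have hcover : r - r₀ ≤ (1 + L) * t ∧ r' - (r₀ - t) ≤ (1 + L) * t := by
      rcases min_choice r (r' - t) with h | h <;> constructor <;> linarith
    have hratio {a b : ℝ} (hab : a ≤ b) (hba : b - a ≤ (1 + L) * t) (hRb : R ≤ b) :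
        ((b - a) / b) ^ δ ≤ ((1 + L) * t / R) ^ δ :=
      Real.rpow_le_rpow (div_nonneg (by linarith) (by linarith))
        (div_le_div₀ (by positivity) hba hR hRb) hδ.le
    have hμ₀ : μ (closedBall x r₀) ≠ 0 := (measure_closedBall_pos μ x (by linarith)).ne'
    have hx := hμ.abs_setAverage_closedBall_sub_le (by linarith) (s := r₀) (by linarith) hr₀r
      subset_rfl (closedBall_subset_closedBall hr₀r) measurableSet_closedBall hμ₀ hfx
      fun z hz => hM z (.inl hz)
    have hy := hμ.abs_setAverage_closedBall_sub_le (by linarith) (s := r₀ - t) (by linarith)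
      (by linarith) (closedBall_subset_closedBall' (by rw [dist_comm]; linarith))
      (closedBall_subset_closedBall' (by linarith)) measurableSet_closedBall hμ₀ hfy
      fun z hz => hM z (.inr hz)
    calc _ ≤ |⨍ z in closedBall x r, f z ∂μ - ⨍ z in closedBall x r₀, f z ∂μ| +
          |⨍ z in closedBall y r', f z ∂μ - ⨍ z in closedBall x r₀, f z ∂μ| := by
          rw [abs_sub_comm (⨍ z in closedBall y r', f z ∂μ)]; exact abs_sub_le _ _ _
      _ ≤ 2 * M * (D * ((1 + L) * t / R) ^ δ) + 2 * M * (D * ((1 + L) * t / R) ^ δ) := by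
          refine add_le_add (hx.trans ?_) (hy.trans ?_) <;> gcongr 2 * M * (D * ?_)
          · exact hratio hr₀r hcover.1 hRr
          · exact hratio (by linarith) hcover.2 hRr'
      _ = 4 * M * D * ((1 + L) * t / R) ^ δ := by ring
  · have hone : 1 ≤ ((1 + L) * t / R) ^ δ :=
      Real.one_le_rpow ((one_le_div hR).2 (by linarith)) hδ.le
    calc _ ≤ M + M := (abs_sub _ _).trans (add_le_add
          (abs_setAverage_le measure_closedBall_lt_top.ne hM0 fun z hz => hM z (.inl hz))
          (abs_setAverage_le measure_closedBall_lt_top.ne hM0 fun z hz => hM z (.inr hz)))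
      _ ≤ 4 * M * 1 * 1 := by linarith
      _ ≤ 4 * M * D * ((1 + L) * t / R) ^ δ := by gcongr

end HasAnnularDecay

-- The operator `T_α` of the paper: `T_α u (x) = alphaMeanValue μ α u (closedBall x (ϱ x))`.
noncomputable def alphaMeanValue {X : Type*} [MeasurableSpace X] (μ : Measure X) (α : ℝ) (u : X → ℝ)
    (B : Set X) : ℝ :=
  α / 2 * (sSup (u '' B) + sInf (u '' B)) + (1 - α) * ⨍ z in B, u z ∂μ

theorem IsGeodesic.exists_sub_le_of_eq_alphaMeanValue {X : Type*} [MetricSpace X] [ProperSpace X]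
    [MeasurableSpace X] [OpensMeasurableSpace X] {μ : Measure X} [IsFiniteMeasureOnCompacts μ]
    [μ.IsOpenPosMeasure] {δ D : ℝ} (hX : IsGeodesic X) (hμ : HasAnnularDecay μ δ D) (hD : 1 ≤ D)
    (hδ0 : 0 < δ) (hδ1 : δ ≤ 1) {u : X → ℝ} {α M L R r r' : ℝ} {x y : X} (hα : α ≤ 1)
    (hR : 0 < R) (hRr : R ≤ r) (hRr' : R ≤ r') (hL : 1 ≤ L) (hrr' : |r - r'| ≤ L * dist x y)
    {s : Set X} (hs : closedBall x r ∪ closedBall y r' ⊆ s) (hu : ContinuousOn u s)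
    (hM : ∀ z ∈ s, |u z| ≤ M) (hux : u x = alphaMeanValue μ α u (closedBall x r))
    (huy : u y = alphaMeanValue μ α u (closedBall y r')) :
    ∃ a ∈ closedBall x r ∪ closedBall y r', ∃ a' ∈ closedBall x r ∪ closedBall y r',
    ∃ b ∈ closedBall x r ∪ closedBall y r', ∃ b' ∈ closedBall x r ∪ closedBall y r',
      dist a a' ^ δ + dist b b' ^ δ ≤ 2 * L ^ δ * dist x y ^ δ ∧
      u x - u y ≤ |α| / 2 * (|u a - u a'| + |u b - u b'|) +
        (1 - α) * (4 * M * D * ((1 + L) / R) ^ δ) * dist x y ^ δ := by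
  replace hu := hu.mono hs
  obtain ⟨a, ha, a', ha', b, hb, b', hb', hcost, hosc⟩ :=
    hX.exists_midrange_sub_le (by linarith) (by linarith) hu hL hrr' hδ0 hδ1 α
  have havg := hμ.abs_setAverage_closedBall_sub_setAverage_closedBall_le hD hδ0 hR hRr hRr' hL
    hrr' ((hu.mono subset_union_left).integrableOn_compact (isCompact_closedBall _ _))
    ((hu.mono subset_union_right).integrableOn_compact (isCompact_closedBall _ _))
    fun z hz => hM z (hs hz)
  refine ⟨a, ha, a', ha', b, hb, b', hb', hcost, ?_⟩
  rw [hux, huy, alphaMeanValue, alphaMeanValue]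
  have := mul_le_mul_of_nonneg_left ((le_abs_self _).trans havg) (sub_nonneg.2 hα)
  linarith

open Filter in
theorem exists_holder_bound_of_contraction {X : Type*} [PseudoMetricSpace X] {S : ℝ → Set X}
    {u : X → ℝ} {Ψ : ℝ → ℝ} {M θ c κ τ Λ δ : ℝ} (hM : ∀ ρ, ∀ x ∈ S ρ, |u x| ≤ M)
    (hθ0 : 0 ≤ θ) (hθ1 : θ < 1) (hq : θ * Λ * τ < 1) (hc : 0 ≤ c) (hκ : 0 < κ)
    (hΨ0 : ∀ ρ, 0 < ρ → 0 ≤ Ψ ρ) (hΨκ : ∀ ρ, 0 < ρ → Ψ (κ * ρ) ≤ τ * Ψ ρ)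
    (hstep : ∀ ρ, 0 < ρ → ∀ x ∈ S ρ, ∀ y ∈ S ρ,
      ∃ a ∈ S (κ * ρ), ∃ a' ∈ S (κ * ρ), ∃ b ∈ S (κ * ρ), ∃ b' ∈ S (κ * ρ),
        dist a a' ^ δ + dist b b' ^ δ ≤ 2 * Λ * dist x y ^ δ ∧
        u x - u y ≤ θ / 2 * (|u a - u a'| + |u b - u b'|) + c * Ψ ρ * dist x y ^ δ)
    {ρ : ℝ} (hρ : 0 < ρ) : ∃ C ≥ 0, ∀ x ∈ S ρ, ∀ y ∈ S ρ, |u x - u y| ≤ C * dist x y ^ δ := by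
  set G := c / (1 - θ * Λ * τ)
  have hG : 0 ≤ G := div_nonneg hc (by linarith)
  have hGfix : θ * Λ * τ * G + c = G := by
    simp only [G]; field_simp [(by linarith : 1 - θ * Λ * τ ≠ 0)]; ring
  -- The error term `θ ^ n * (2 * M)` is what remains after `n` applications of the step.
  have hiter (n : ℕ) : ∀ ρ, 0 < ρ → ∀ x ∈ S ρ, ∀ y ∈ S ρ,
      |u x - u y| ≤ θ ^ n * (2 * M) + G * Ψ ρ * dist x y ^ δ := by
    induction n with
    | zero =>
      intro ρ hρ x hx y hy
      have hΨρ := hΨ0 ρ hρ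
      have : 0 ≤ G * Ψ ρ * dist x y ^ δ := by positivity
      linarith [abs_sub (u x) (u y), hM ρ x hx, hM ρ y hy, pow_zero θ]
    | succ n ih =>
      have one_side : ∀ ρ, 0 < ρ → ∀ x ∈ S ρ, ∀ y ∈ S ρ,
          u x - u y ≤ θ ^ (n + 1) * (2 * M) + G * Ψ ρ * dist x y ^ δ := by
        intro ρ hρ x hx y hy
        obtain ⟨a, ha, a', ha', b, hb, b', hb', hcost, hxy⟩ := hstep ρ hρ x hx y hy
        have hκρ := mul_pos hκ hρ
        have hΨκρ := hΨ0 _ hκρ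
        have hτΨ : 0 ≤ τ * Ψ ρ := hΨκρ.trans (hΨκ ρ hρ)
        calc u x - u y ≤ θ / 2 * (|u a - u a'| + |u b - u b'|) + c * Ψ ρ * dist x y ^ δ := hxy
          _ ≤ θ / 2 * ((θ ^ n * (2 * M) + G * Ψ (κ * ρ) * dist a a' ^ δ) +
                (θ ^ n * (2 * M) + G * Ψ (κ * ρ) * dist b b' ^ δ)) + c * Ψ ρ * dist x y ^ δ := by
              gcongr
              · exact ih _ hκρ a ha a' ha'
              · exact ih _ hκρ b hb b' hb'
          _ = θ ^ (n + 1) * (2 * M) + θ / 2 * G * Ψ (κ * ρ) * (dist a a' ^ δ + dist b b' ^ δ) +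
                c * Ψ ρ * dist x y ^ δ := by ring
          _ ≤ θ ^ (n + 1) * (2 * M) + θ / 2 * G * (τ * Ψ ρ) * (2 * Λ * dist x y ^ δ) +
                c * Ψ ρ * dist x y ^ δ := by gcongr; exact hΨκ ρ hρ
          _ = θ ^ (n + 1) * (2 * M) + (θ * Λ * τ * G + c) * Ψ ρ * dist x y ^ δ := by ring
          _ = θ ^ (n + 1) * (2 * M) + G * Ψ ρ * dist x y ^ δ := by rw [hGfix]
      intro ρ hρ x hx y hy
      refine abs_sub_le_iff.2 ⟨one_side ρ hρ x hx y hy, ?_⟩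
      simpa only [dist_comm] using one_side ρ hρ y hy x hx
  refine ⟨G * Ψ ρ, mul_nonneg hG (hΨ0 ρ hρ), fun x hx y hy => ?_⟩
  have hlim : Tendsto (fun n : ℕ => θ ^ n * (2 * M) + G * Ψ ρ * dist x y ^ δ) atTop
      (nhds (G * Ψ ρ * dist x y ^ δ)) := by
    simpa using ((tendsto_pow_atTop_nhds_zero_of_lt_one hθ0 hθ1).mul_const (2 * M)).add_const
      (G * Ψ ρ * dist x y ^ δ)
  exact ge_of_tendsto' hlim fun n => hiter n ρ hρ x hx y hy

theorem div_mul_mul_rpow_rpow {A c κ ρ β δ : ℝ} (hA : 0 ≤ A) (hc : 0 < c) (hκ : 0 < κ)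
    (hρ : 0 < ρ) : (A / (c * (κ * ρ) ^ β)) ^ δ = (κ ^ β)⁻¹ ^ δ * (A / (c * ρ ^ β)) ^ δ := by
  have hκβ : 0 < κ ^ β := Real.rpow_pos_of_pos hκ β
  have hρβ : 0 < ρ ^ β := Real.rpow_pos_of_pos hρ β
  rw [← Real.mul_rpow (inv_nonneg.2 hκβ.le) (by positivity), Real.mul_rpow hκ.le hρ.le]
  congr 1
  field_simp

theorem mul_abs_lt_rpow_of_lt_log_div_log {α L ε β : ℝ} (hLα : 0 < L * |α|) (hε0 : 0 < ε)
    (hε1 : ε < 1) (hβ : β < Real.log (1 / (L * |α|)) / Real.log (1 / (1 - ε))) :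
    L * |α| < (1 - ε) ^ β := by
  have hlog : 0 < Real.log (1 / (1 - ε)) :=
    Real.log_pos ((one_lt_div (by linarith)).2 (by linarith))
  have h := (lt_div_iff₀ hlog).1 hβ
  rw [one_div, Real.log_inv, one_div, Real.log_inv] at h
  rw [← Real.log_lt_log_iff hLα (Real.rpow_pos_of_pos (by linarith) β),
    Real.log_rpow (by linarith)]
  linarith

theorem abs_mul_rpow_mul_inv_rpow_lt_one {α L ε β δ : ℝ} (hL : 0 < L) (hα : |α| ≤ 1)
    (hε0 : 0 < ε) (hε1 : ε < 1) (hδ0 : 0 < δ) (hδ1 : δ ≤ 1)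
    (hβ : β < Real.log (1 / (L * |α|)) / Real.log (1 / (1 - ε))) :
    |α| * L ^ δ * ((1 - ε) ^ β)⁻¹ ^ δ < 1 := by
  rcases (abs_nonneg α).eq_or_lt with h0 | hα0
  · simp [← h0]
  have hκ : 0 < (1 - ε) ^ β := Real.rpow_pos_of_pos (by linarith) β
  have hlt := mul_abs_lt_rpow_of_lt_log_div_log (mul_pos hL hα0) hε0 hε1 hβ
  rw [Real.inv_rpow hκ.le, ← div_eq_mul_inv, div_lt_one (by positivity)]
  calc |α| * L ^ δ ≤ |α| ^ δ * L ^ δ := by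
        gcongr; exact Real.self_le_rpow_of_le_one hα0.le hα hδ1
    _ = (L * |α|) ^ δ := by rw [Real.mul_rpow hL.le hα0.le, mul_comm]
    _ < ((1 - ε) ^ β) ^ δ := by gcongr

theorem holder_regularity_of_alpha_mean_value_property_general
    {X : Type*} [MetricSpace X] [ProperSpace X] [MeasurableSpace X] [BorelSpace X]
    (μ : Measure X)
    (hgeo : ∀ x y : X, ∀ s : ℝ, 0 ≤ s → s ≤ dist x y →
      ∃ z : X, dist x z = s ∧ dist z y = dist x y - s)
    (δ Dδ : ℝ) (hδ : 0 < δ) (hδ1 : δ ≤ 1) (hDδ : 1 ≤ Dδ)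
    (hballs : ∀ (x : X) (r : ℝ), 0 < r → 0 < μ (closedBall x r) ∧ μ (closedBall x r) < ⊤)
    (hAD : ∀ (x : X) (r R : ℝ), 0 < r → r ≤ R →
      μ (closedBall x R \ closedBall x r) ≤
        ENNReal.ofReal (Dδ * (((R - r) / R) ^ δ)) * μ (closedBall x R))
    (Ω : Set X) (hΩopen : IsOpen Ω) (hΩbdd : Bornology.IsBounded Ω)
    (ϱ : X → ℝ)
    (hadm : ∀ x ∈ Ω, 0 < ϱ x ∧ ϱ x ≤ infDist x (frontier Ω))
    (L : ℝ) (hL : 1 ≤ L)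
    (hLip : ∀ x ∈ Ω, ∀ y ∈ Ω, |ϱ x - ϱ y| ≤ L * dist x y)
    (lam β ε α : ℝ)
    (hlam0 : 0 < lam)
    (hbounds : ∀ x ∈ Ω,
      lam * infDist x (frontier Ω) ^ β ≤ ϱ x ∧ ϱ x ≤ ε * infDist x (frontier Ω))
    (hαL : |α| < L⁻¹) (hε0 : 0 < ε) (hε : ε < 1 - L * |α|)
    (hβ1 : 1 ≤ β)
    (hβ : β < Real.log (1 / (L * |α|)) / Real.log (1 / (1 - ε)))
    (u : X → ℝ) (hu : ContinuousOn u (closure Ω))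
    (hfix : ∀ x ∈ Ω, u x =
      (α / 2) * (sSup (u '' closedBall x (ϱ x)) + sInf (u '' closedBall x (ϱ x))) +
        (1 - α) * ⨍ y in closedBall x (ϱ x), u y ∂μ) :
    ∀ (K : Set X), IsCompact K → K ⊆ Ω →
      ∃ C ≥ 0, ∀ x ∈ K, ∀ y ∈ K, |u x - u y| ≤ C * dist x y ^ δ := by
  intro K hK hKΩ
  have hX : IsGeodesic X := hgeo
  have := isFiniteMeasureOnCompacts_of_measure_closedBall_lt_top fun x r hr => (hballs x r hr).2
  have := isOpenPosMeasure_of_measure_closedBall_pos fun x r hr => (hballs x r hr).1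
  have hα1 : |α| < 1 := hαL.trans_le (inv_le_one_of_one_le₀ hL)
  have hε1 : ε < 1 := by nlinarith [abs_nonneg α]
  obtain ⟨M, hM0, hM⟩ :=
    (hΩbdd.isCompact_closure.image_of_continuousOn hu).isBounded.exists_pos_norm_le
  replace hM (x) (hx : x ∈ closure Ω) : |u x| ≤ M := hM _ (mem_image_of_mem u hx)
  have hd (x) (hx : x ∈ Ω) : 0 < infDist x (frontier Ω) := (hadm x hx).1.trans_le (hadm x hx).2
  set S : ℝ → Set X := fun ρ => {x ∈ Ω | ρ ≤ infDist x (frontier Ω)}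
  have hBS (ρ : ℝ) (x) (hx : x ∈ S ρ) : closedBall x (ϱ x) ⊆ S ((1 - ε) * ρ) :=
    hX.closedBall_subset_of_le_mul_infDist_frontier hΩopen hx.1 hx.2 (hd x hx.1) hε1
      (hbounds x hx.1).2
  have hRϱ (ρ : ℝ) (hρ : 0 < ρ) (x) (hx : x ∈ S ρ) : lam * ρ ^ β ≤ ϱ x :=
    (mul_le_mul_of_nonneg_left (Real.rpow_le_rpow hρ.le hx.2 (by linarith)) hlam0.le).trans
      (hbounds x hx.1).1
  obtain ⟨ρ, hρ, hρK⟩ :=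
    hK.exists_forall_le' (continuous_infDist_pt _).continuousOn fun x hx => hd x (hKΩ hx)
  obtain ⟨C, hC, hCS⟩ := exists_holder_bound_of_contraction (S := S) (c := 1 - α) (κ := 1 - ε)
    (δ := δ) (Ψ := fun ρ => 4 * M * Dδ * ((1 + L) / (lam * ρ ^ β)) ^ δ)
    (fun ρ x hx => hM x (subset_closure hx.1)) (abs_nonneg α) hα1
    (abs_mul_rpow_mul_inv_rpow_lt_one (by linarith) hα1.le hε0 hε1 hδ hδ1 hβ)
    (by linarith [le_abs_self α]) (by linarith) (fun ρ hρ => by positivity)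
    (fun ρ hρ => le_of_eq (by
      rw [div_mul_mul_rpow_rpow (by linarith) hlam0 (by linarith) hρ]; ring))
    (fun ρ hρ x hx y hy => by
      have hS := union_subset (hBS ρ x hx) (hBS ρ y hy)
      obtain ⟨a, ha, a', ha', b, hb, b', hb', h⟩ := hX.exists_sub_le_of_eq_alphaMeanValue hAD
        hDδ hδ hδ1 (by linarith [le_abs_self α]) (by positivity) (hRϱ ρ hρ x hx)
        (hRϱ ρ hρ y hy) hL (hLip x hx.1 y hy.1) (hS.trans fun z hz => subset_closure hz.1) hu
        hM (hfix x hx.1) (hfix y hy.1)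
      exact ⟨a, hS ha, a', hS ha', b, hS hb, b', hS hb', h⟩) hρ
  exact ⟨C, hC, fun x hx y hy => hCS x ⟨hKΩ hx, hρK x hx⟩ y ⟨hKΩ hy, hρK y hy⟩⟩

theorem holder_regularity_of_alpha_mean_value_property
    {X : Type*} [MetricSpace X] [ProperSpace X] [MeasurableSpace X] [BorelSpace X]
    (μ : Measure X)
    (hgeo : ∀ x y : X, ∀ s : ℝ, 0 ≤ s → s ≤ dist x y →
      ∃ z : X, dist x z = s ∧ dist z y = dist x y - s)
    (δ Dδ : ℝ) (hδ : 0 < δ) (hδ1 : δ ≤ 1) (hDδ : 1 ≤ Dδ)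
    (hballs : ∀ (x : X) (r : ℝ), 0 < r → 0 < μ (closedBall x r) ∧ μ (closedBall x r) < ⊤)
    (hAD : ∀ (x : X) (r R : ℝ), 0 < r → r ≤ R →
      μ (closedBall x R \ closedBall x r) ≤
        ENNReal.ofReal (Dδ * (((R - r) / R) ^ δ)) * μ (closedBall x R))
    (Ω : Set X) (hΩopen : IsOpen Ω) (hΩbdd : Bornology.IsBounded Ω)
    (ϱ : X → ℝ) (hϱcont : ContinuousOn ϱ (closure Ω))
    (hadm : ∀ x ∈ Ω, 0 < ϱ x ∧ ϱ x ≤ infDist x (frontier Ω))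
    (hϱ0 : ∀ x ∈ frontier Ω, ϱ x = 0)
    (L : ℝ) (hL : 1 ≤ L)
    (hLip : ∀ x ∈ Ω, ∀ y ∈ Ω, |ϱ x - ϱ y| ≤ L * dist x y)
    (lam β ε α : ℝ)
    (hlam0 : 0 < lam)
    (hlam : lam ≤ (sSup ((fun x => infDist x (frontier Ω)) '' Ω)) ^ (1 - β) * ε)
    (hbounds : ∀ x ∈ Ω,
      lam * infDist x (frontier Ω) ^ β ≤ ϱ x ∧ ϱ x ≤ ε * infDist x (frontier Ω))
    (hαL : |α| < L⁻¹) (hε0 : 0 < ε) (hε : ε < 1 - L * |α|)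
    (hβ1 : 1 ≤ β)
    (hβ : β < Real.log (1 / (L * |α|)) / Real.log (1 / (1 - ε)))
    (u : X → ℝ) (hu : ContinuousOn u (closure Ω))
    (hfix : ∀ x ∈ Ω, u x =
      (α / 2) * (sSup (u '' closedBall x (ϱ x)) + sInf (u '' closedBall x (ϱ x))) +
        (1 - α) * ⨍ y in closedBall x (ϱ x), u y ∂μ) :
    ∀ (K : Set X), IsCompact K → K ⊆ Ω →
      ∃ C ≥ 0, ∀ x ∈ K, ∀ y ∈ K, |u x - u y| ≤ C * dist x y ^ δ :=
  holder_regularity_of_alpha_mean_value_property_general μ hgeo δ Dδ hδ hδ1 hDδ hballs hAD Ω hΩopen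
    hΩbdd ϱ hadm L hL hLip lam β ε α hlam0 hbounds hαL hε0 hε hβ1 hβ u hu hfix
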